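/- arXiv:2101.00791 — 2 statements merged into one kernel-verified Lean document; each statement's English description precedes it below -/
import Mathlib

section
/- Let x_i, x_j, x_k be unit vectors in ℝ³ with x_k ≠ ±x_i and x_k ≠ ±x_j, and let v ∈ ℝ³. Then ‖R_{x_k→x_i}(v) − R_{x_k→x_j}(v)‖ ≤ 2‖v‖ ‖x_i − x_j‖ + (‖v‖/2) ‖x_i − x_k‖² + (‖v‖/2) ‖x_j − x_k‖². -/
open Matrix Set
open scoped BigOperators

noncomputable section

/-- The Euclidean norm on `ℝ³`, realized as `Fin 3 → ℝ`. -/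
def enorm3 (a : Fin 3 → ℝ) : ℝ := Real.sqrt (a ⬝ᵥ a)

/-- The cross product on `ℝ³`. -/
def cross3 (a b : Fin 3 → ℝ) : Fin 3 → ℝ :=
  ![a 1 * b 2 - a 2 * b 1, a 2 * b 0 - a 0 * b 2, a 0 * b 1 - a 1 * b 0]

/-- The unit vector `u = (z₁ × z₂)/‖z₁ × z₂‖`. -/
def uvec3 (z₁ z₂ : Fin 3 → ℝ) : Fin 3 → ℝ := (enorm3 (cross3 z₁ z₂))⁻¹ • cross3 z₁ z₂

/-- The rotation matrix `R(z₁,z₂) = ⟨z₁,z₂⟩ I + z₂ z₁ᵀ − z₁ z₂ᵀ + (1 − ⟨z₁,z₂⟩) u uᵀ`. -/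
def rotMatrix (z₁ z₂ : Fin 3 → ℝ) : Matrix (Fin 3) (Fin 3) ℝ :=
  (z₁ ⬝ᵥ z₂) • (1 : Matrix (Fin 3) (Fin 3) ℝ)
    + vecMulVec z₂ z₁ - vecMulVec z₁ z₂
    + (1 - z₁ ⬝ᵥ z₂) • vecMulVec (uvec3 z₁ z₂) (uvec3 z₁ z₂)

/-- `R_{z₁→z₂}(v)`, with the convention `R_{z→z} = I`. -/
def rotApply (z₁ z₂ v : Fin 3 → ℝ) : Fin 3 → ℝ :=
  if z₁ = z₂ then v else (rotMatrix z₁ z₂).mulVec v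

/-!
Write `c = ⟨z₁, z₂⟩`. Expanding the matrix, `R(z₁,z₂) v` is the first-order rotation
`v + ⟨z₁,v⟩ z₂ − ⟨z₂,v⟩ z₁` corrected by `(1 − c)(⟨u,v⟩ u − v)`. For unit vectors
`1 − c = ‖z₂ − z₁‖²/2`, and since `‖u‖ ≤ 1` (`u = 0` when `z₁ × z₂ = 0`) the correction
has norm at most `‖v‖ ‖z₂ − z₁‖²/2`. The first-order rotations towards `x_i` and `x_j`
differ by `⟨x_k,v⟩(x_i − x_j) − ⟨x_i − x_j,v⟩ x_k`, of norm at most `2 ‖v‖ ‖x_i − x_j‖`;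
the triangle inequality adds up the three terms.
-/

open scoped RealInnerProductSpace

section InnerProductSpace

variable {E : Type*} [NormedAddCommGroup E] [InnerProductSpace ℝ E]

lemma norm_inner_smul_sub_le {u : E} (hu : ‖u‖ ≤ 1) (v : E) : ‖⟪u, v⟫ • u - v‖ ≤ ‖v‖ := by
  have hsq : ‖⟪u, v⟫ • u - v‖ ^ 2 = ‖v‖ ^ 2 - ⟪u, v⟫ ^ 2 * (2 - ‖u‖ ^ 2) := by
    rw [norm_sub_sq_real, norm_smul, real_inner_smul_left, Real.norm_eq_abs, mul_pow, sq_abs]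
    ring
  rw [← pow_le_pow_iff_left₀ (norm_nonneg _) (norm_nonneg _) two_ne_zero, hsq]
  have : ‖u‖ ^ 2 ≤ 1 := pow_le_one₀ (norm_nonneg u) hu
  nlinarith [sq_nonneg ⟪u, v⟫]

lemma norm_inner_smul_sub_inner_smul_le (a b v : E) :
    ‖⟪a, v⟫ • b - ⟪b, v⟫ • a‖ ≤ 2 * ‖a‖ * ‖b‖ * ‖v‖ := by
  calc ‖⟪a, v⟫ • b - ⟪b, v⟫ • a‖ ≤ |⟪a, v⟫| * ‖b‖ + |⟪b, v⟫| * ‖a‖ := by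
        simpa only [norm_smul, Real.norm_eq_abs] using norm_sub_le (⟪a, v⟫ • b) (⟪b, v⟫ • a)
    _ ≤ ‖a‖ * ‖v‖ * ‖b‖ + ‖b‖ * ‖v‖ * ‖a‖ := by
        gcongr <;> exact abs_real_inner_le_norm _ _
    _ = 2 * ‖a‖ * ‖b‖ * ‖v‖ := by ring

lemma one_sub_inner_eq_of_norm_eq_one {a b : E} (ha : ‖a‖ = 1) (hb : ‖b‖ = 1) :
    1 - ⟪a, b⟫ = ‖b - a‖ ^ 2 / 2 := by
  rw [norm_sub_sq_real, ha, hb, real_inner_comm]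
  ring

end InnerProductSpace

lemma enorm3_eq_norm (a : Fin 3 → ℝ) : enorm3 a = ‖WithLp.toLp 2 a‖ := by
  simp [enorm3, EuclideanSpace.norm_eq, dotProduct, sq]

lemma dotProduct_eq_inner (a b : Fin 3 → ℝ) : a ⬝ᵥ b = ⟪WithLp.toLp 2 a, WithLp.toLp 2 b⟫ := by
  simp [EuclideanSpace.inner_eq_star_dotProduct, dotProduct_comm]

lemma enorm3_add_le (a b : Fin 3 → ℝ) : enorm3 (a + b) ≤ enorm3 a + enorm3 b := by
  simpa only [enorm3_eq_norm, WithLp.toLp_add] using norm_add_le _ _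

lemma enorm3_sub_le (a b : Fin 3 → ℝ) : enorm3 (a - b) ≤ enorm3 a + enorm3 b := by
  simpa only [enorm3_eq_norm, WithLp.toLp_sub] using norm_sub_le _ _

lemma enorm3_uvec3_le_one (z₁ z₂ : Fin 3 → ℝ) : enorm3 (uvec3 z₁ z₂) ≤ 1 := by
  rw [uvec3, enorm3_eq_norm, WithLp.toLp_smul, enorm3_eq_norm]
  rcases eq_or_ne (WithLp.toLp 2 (cross3 z₁ z₂)) 0 with h | h
  · simp [h]
  · exact (norm_smul_inv_norm (𝕜 := ℝ) h).le

def rotLinear (z₁ z₂ v : Fin 3 → ℝ) : Fin 3 → ℝ := v + (z₁ ⬝ᵥ v) • z₂ - (z₂ ⬝ᵥ v) • z₁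

lemma rotMatrix_mulVec (z₁ z₂ v : Fin 3 → ℝ) :
    rotMatrix z₁ z₂ *ᵥ v
      = rotLinear z₁ z₂ v + (1 - z₁ ⬝ᵥ z₂) • ((uvec3 z₁ z₂ ⬝ᵥ v) • uvec3 z₁ z₂ - v) := by
  simp only [rotMatrix, rotLinear, add_mulVec, sub_mulVec, smul_mulVec, one_mulVec,
    vecMulVec_mulVec, op_smul_eq_smul]
  module

lemma enorm3_rotApply_sub_rotLinear_le {z₁ z₂ : Fin 3 → ℝ} (hz₁ : enorm3 z₁ = 1)
    (hz₂ : enorm3 z₂ = 1) (v : Fin 3 → ℝ) :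
    enorm3 (rotApply z₁ z₂ v - rotLinear z₁ z₂ v) ≤ enorm3 v / 2 * enorm3 (z₂ - z₁) ^ 2 := by
  by_cases h : z₁ = z₂
  · subst h
    simp [rotApply, rotLinear, enorm3]
  rw [rotApply, if_neg h, rotMatrix_mulVec, add_sub_cancel_left]
  simp only [enorm3_eq_norm, dotProduct_eq_inner, WithLp.toLp_smul, WithLp.toLp_sub,
    norm_smul, Real.norm_eq_abs] at hz₁ hz₂ ⊢
  rw [one_sub_inner_eq_of_norm_eq_one hz₁ hz₂, abs_of_nonneg (by positivity)]
  have hu : ‖WithLp.toLp 2 (uvec3 z₁ z₂)‖ ≤ 1 := by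
    simpa only [enorm3_eq_norm] using enorm3_uvec3_le_one z₁ z₂
  calc _ ≤ ‖WithLp.toLp 2 z₂ - WithLp.toLp 2 z₁‖ ^ 2 / 2 * ‖WithLp.toLp 2 v‖ := by
        gcongr
        exact norm_inner_smul_sub_le hu _
    _ = _ := by ring

lemma rotLinear_sub_rotLinear (z x y v : Fin 3 → ℝ) :
    rotLinear z x v - rotLinear z y v = (z ⬝ᵥ v) • (x - y) - ((x - y) ⬝ᵥ v) • z := by
  simp only [rotLinear, sub_dotProduct]
  module

lemma enorm3_rotLinear_sub_rotLinear_le {z : Fin 3 → ℝ} (hz : enorm3 z = 1) (x y v : Fin 3 → ℝ) :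
    enorm3 (rotLinear z x v - rotLinear z y v) ≤ 2 * enorm3 v * enorm3 (x - y) := by
  rw [rotLinear_sub_rotLinear]
  simp only [enorm3_eq_norm, dotProduct_eq_inner, WithLp.toLp_smul, WithLp.toLp_sub] at hz ⊢
  calc _ ≤ 2 * ‖WithLp.toLp 2 z‖ * ‖WithLp.toLp 2 x - WithLp.toLp 2 y‖ * ‖WithLp.toLp 2 v‖ :=
        norm_inner_smul_sub_inner_smul_le _ _ _
    _ = _ := by rw [hz]; ring

theorem rot_difference_bound_general (xi xj xk : Fin 3 → ℝ)
    (hxi : enorm3 xi = 1) (hxj : enorm3 xj = 1) (hxk : enorm3 xk = 1)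
    (v : Fin 3 → ℝ) :
    enorm3 (rotApply xk xi v - rotApply xk xj v)
      ≤ 2 * enorm3 v * enorm3 (xi - xj)
        + enorm3 v / 2 * (enorm3 (xi - xk))^2
        + enorm3 v / 2 * (enorm3 (xj - xk))^2 := by
  have hsplit : rotApply xk xi v - rotApply xk xj v
      = (rotLinear xk xi v - rotLinear xk xj v) + (rotApply xk xi v - rotLinear xk xi v)
        - (rotApply xk xj v - rotLinear xk xj v) := by abel
  calc enorm3 (rotApply xk xi v - rotApply xk xj v)
      ≤ enorm3 (rotLinear xk xi v - rotLinear xk xj v)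
        + enorm3 (rotApply xk xi v - rotLinear xk xi v)
        + enorm3 (rotApply xk xj v - rotLinear xk xj v) := by
        rw [hsplit]
        exact (enorm3_sub_le _ _).trans (by gcongr; exact enorm3_add_le _ _)
    _ ≤ _ := by
        gcongr
        · exact enorm3_rotLinear_sub_rotLinear_le hxk xi xj v
        · exact enorm3_rotApply_sub_rotLinear_le hxk hxi v
        · exact enorm3_rotApply_sub_rotLinear_le hxk hxj v

/-- For unit vectors `x_i, x_j, x_k` with `x_k ≠ ±x_i`, `x_k ≠ ±x_j`,
`‖R_{x_k→x_i}(v) − R_{x_k→x_j}(v)‖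
  ≤ 2‖v‖‖x_i−x_j‖ + (‖v‖/2)‖x_i−x_k‖² + (‖v‖/2)‖x_j−x_k‖²`. -/
theorem rot_difference_bound (xi xj xk : Fin 3 → ℝ)
    (hxi : enorm3 xi = 1) (hxj : enorm3 xj = 1) (hxk : enorm3 xk = 1)
    (h1 : xk ≠ xi) (h2 : xk ≠ -xi) (h3 : xk ≠ xj) (h4 : xk ≠ -xj)
    (v : Fin 3 → ℝ) :
    enorm3 (rotApply xk xi v - rotApply xk xj v)
      ≤ 2 * enorm3 v * enorm3 (xi - xj)
        + enorm3 v / 2 * (enorm3 (xi - xk))^2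
        + enorm3 v / 2 * (enorm3 (xj - xk))^2 :=
  rot_difference_bound_general xi xj xk hxi hxj hxk v
end
end

section
/- Let N ≥ 1, σ > 0, let ψ : [0,2] → ℝ be a nonnegative strictly decreasing C¹ function with ψ(2) = 0, set ψ₀ := ψ(0), ψ_{ab} := ψ(‖x_a − x_b‖), and ‖ψ‖_{C¹} := sup_{s ∈ [0,2]} (|ψ(s)| + |ψ′(s)|). Let x_1, …, x_N be unit vectors in ℝ³, pairwise satisfying x_a ≠ −x_b, and let v_1, …, v_N ∈ ℝ³. Fix i, j and define F₂ := −((‖v_i‖² + ‖v_j‖²)/2) ‖x_i − x_j‖² + (ψ₀/N) Σ_{k=1}^N ⟨R_{x_k→x_i}(v_k) − R_{x_k→x_j}(v_k), x_i − x_j⟩ + Σ_{k=1}^N ((ψ_{ik} − ψ₀)/N) ⟨R_{x_k→x_i}(v_k) − v_i, x_i − x_j⟩ − Σ_{k=1}^N ((ψ_{jk} − ψ₀)/N) ⟨R_{x_k→x_j}(v_k) − v_j, x_i − x_j⟩ + (σ/(4N)) Σ_{k=1}^N ‖x_k − x_i‖² ‖x_i − x_j‖² + (σ/(4N)) Σ_{k=1}^N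 ‖x_k − x_j‖² ‖x_i − x_j‖². Let 𝒱 := max_k ‖v_k‖ and 𝒟ₓ := max_{a,b} ‖x_a − x_b‖. Then |F₂| ≤ (𝒱 + 6‖ψ‖_{C¹}) 𝒱 𝒟ₓ² + ψ₀ 𝒱 𝒟ₓ³ + (σ/2) 𝒟ₓ⁴. -/
open Matrix Set
open scoped BigOperators

noncomputable section

/-!
For unit vectors with `c = ⟨x, y⟩ > -1` and `w = x × y`, the rotation is
`R_{x→y} v = c v + ⟨x, v⟩ y - ⟨y, v⟩ x + (⟨w, v⟩ / (1 + c)) w`. It is an isometry, and for two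
targets `y, z` the first three terms give `⟨R_{x→y} v - R_{x→z} v, y - z⟩ = ⟨x, v⟩ ‖y - z‖²` up to
the two `w`-terms, each of size at most `‖v‖ ‖y - z‖ ‖x - y‖² / 2` because
`‖w‖² / (1 + c) = 1 - c = ‖x - y‖² / 2`. This yields the `ψ₀ 𝒱 𝒟ₓ³` term (the accompanying
`ψ₀ 𝒱 𝒟ₓ²` is absorbed using `ψ₀ ≤ ‖ψ‖_{C¹}`). The weights `ψ_{ab} - ψ₀` are at most
`‖ψ‖_{C¹} 𝒟ₓ` by the mean value theorem, and every average over `k` is bounded by its largest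
summand.
-/

lemma cross_dot_sq {R : Type*} [CommRing R] (a b v : Fin 3 → R) :
    (a ⨯₃ b ⬝ᵥ v) ^ 2 = (a ⬝ᵥ a) * (b ⬝ᵥ b) * (v ⬝ᵥ v) + 2 * (a ⬝ᵥ b) * (a ⬝ᵥ v) * (b ⬝ᵥ v)
      - (a ⬝ᵥ v) ^ 2 * (b ⬝ᵥ b) - (b ⬝ᵥ v) ^ 2 * (a ⬝ᵥ a) - (v ⬝ᵥ v) * (a ⬝ᵥ b) ^ 2 := by
  simp_rw [cross_apply, vec3_dotProduct]
  dsimp only [Matrix.cons_val]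
  ring

lemma dotProduct_self_pos {n : Type*} [Fintype n] {a : n → ℝ} (h : a ≠ 0) : 0 < a ⬝ᵥ a :=
  (Finset.sum_nonneg fun i _ => mul_self_nonneg (a i)).lt_of_ne' (dotProduct_self_eq_zero.not.2 h)

lemma enorm3_nonneg (a : Fin 3 → ℝ) : 0 ≤ enorm3 a := Real.sqrt_nonneg _

lemma enorm3_sq (a : Fin 3 → ℝ) : enorm3 a ^ 2 = a ⬝ᵥ a :=
  Real.sq_sqrt (Finset.sum_nonneg fun i _ => mul_self_nonneg (a i))

lemma enorm3_zero : enorm3 0 = 0 := by simp [enorm3]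

lemma abs_dotProduct_le (a b : Fin 3 → ℝ) : |a ⬝ᵥ b| ≤ enorm3 a * enorm3 b := by
  refine abs_le_of_sq_le_sq ?_ (mul_nonneg (enorm3_nonneg a) (enorm3_nonneg b))
  have lagrange := cross_dot_cross a b a b
  rw [dotProduct_comm b a, ← enorm3_sq] at lagrange
  rw [mul_pow, enorm3_sq, enorm3_sq]
  nlinarith [sq_nonneg (enorm3 (a ⨯₃ b))]

section UnitVectors

variable {a b : Fin 3 → ℝ}

lemma dotProduct_self_eq_one (ha : enorm3 a = 1) : a ⬝ᵥ a = 1 := by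
  rw [← enorm3_sq, ha, one_pow]

lemma enorm3_sub_sq (ha : enorm3 a = 1) (hb : enorm3 b = 1) :
    enorm3 (a - b) ^ 2 = 2 - 2 * (a ⬝ᵥ b) := by
  rw [enorm3_sq, sub_dotProduct, dotProduct_sub, dotProduct_sub, dotProduct_comm b a,
    dotProduct_self_eq_one ha, dotProduct_self_eq_one hb]
  ring

lemma enorm3_sub_mem_Icc (ha : enorm3 a = 1) (hb : enorm3 b = 1) :
    enorm3 (a - b) ∈ Icc (0 : ℝ) 2 := by
  refine ⟨enorm3_nonneg _, (sq_le_sq₀ (enorm3_nonneg _) zero_le_two).1 ?_⟩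
  have := (abs_le.1 (abs_dotProduct_le a b)).1
  rw [ha, hb, mul_one] at this
  rw [enorm3_sub_sq ha hb]
  linarith

lemma neg_one_lt_dotProduct (ha : enorm3 a = 1) (hb : enorm3 b = 1) (hne : a ≠ -b) :
    -1 < a ⬝ᵥ b := by
  have := dotProduct_self_pos (a := a + b) (fun h => hne (eq_neg_of_add_eq_zero_left h))
  rw [add_dotProduct, dotProduct_add, dotProduct_add, dotProduct_comm b a,
    dotProduct_self_eq_one ha, dotProduct_self_eq_one hb] at this
  linarith

lemma dotProduct_lt_one (ha : enorm3 a = 1) (hb : enorm3 b = 1) (hne : a ≠ b) :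
    a ⬝ᵥ b < 1 := by
  have := dotProduct_self_pos (sub_ne_zero.2 hne)
  rw [← enorm3_sq, enorm3_sub_sq ha hb] at this
  linarith

end UnitVectors

section Rotation

variable {x y z : Fin 3 → ℝ}

lemma cross3_eq_cross (a b : Fin 3 → ℝ) : cross3 a b = a ⨯₃ b := rfl

/-- With `c = x ⬝ᵥ y` and `w = x ⨯₃ y`, the rank-one term `(1 - c) u uᵀ` equals `w wᵀ / (1 + c)`
because `‖w‖² = 1 - c²`; in this form the formula also covers `x = y`, where `w = 0`. -/
lemma rotApply_eq (hx : enorm3 x = 1) (hy : enorm3 y = 1) (hne : x ≠ -y) (v : Fin 3 → ℝ) :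
    rotApply x y v = (x ⬝ᵥ y) • v + (x ⬝ᵥ v) • y - (y ⬝ᵥ v) • x
      + ((x ⨯₃ y ⬝ᵥ v) / (1 + x ⬝ᵥ y)) • x ⨯₃ y := by
  by_cases heq : x = y
  · subst heq
    simp [rotApply, dotProduct_self_eq_one hx]
  have hc : 1 + x ⬝ᵥ y ≠ 0 := by linarith [neg_one_lt_dotProduct hx hy hne]
  have hw : enorm3 (x ⨯₃ y) ^ 2 = 1 - (x ⬝ᵥ y) ^ 2 := by
    rw [enorm3_sq, cross_dot_cross, dotProduct_self_eq_one hx, dotProduct_self_eq_one hy,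
      dotProduct_comm y x]
    ring
  have hw₀ : enorm3 (x ⨯₃ y) ≠ 0 := by
    intro h
    rw [h] at hw
    nlinarith [dotProduct_lt_one hx hy heq, neg_one_lt_dotProduct hx hy hne]
  simp only [rotApply, if_neg heq, rotMatrix, uvec3, cross3_eq_cross, add_mulVec, sub_mulVec,
    smul_mulVec, one_mulVec, vecMulVec_mulVec, op_smul_eq_smul, smul_dotProduct, smul_eq_mul,
    smul_smul]
  congr 2
  field_simp
  linear_combination (-(x ⨯₃ y ⬝ᵥ v)) * hw

lemma rotApply_dotProduct_self (hx : enorm3 x = 1) (hy : enorm3 y = 1) (hne : x ≠ -y)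
    (v : Fin 3 → ℝ) : rotApply x y v ⬝ᵥ rotApply x y v = v ⬝ᵥ v := by
  have hc : 1 + x ⬝ᵥ y ≠ 0 := by linarith [neg_one_lt_dotProduct hx hy hne]
  have gram := cross_dot_sq x y v
  have hww := cross_dot_cross x y x y
  have hw₁ : x ⨯₃ y ⬝ᵥ x = 0 := by rw [dotProduct_comm, dot_self_cross]
  have hw₂ : x ⨯₃ y ⬝ᵥ y = 0 := by rw [dotProduct_comm, dot_cross_self]
  rw [dotProduct_self_eq_one hx, dotProduct_self_eq_one hy] at gram hww
  rw [rotApply_eq hx hy hne]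
  simp only [add_dotProduct, sub_dotProduct, dotProduct_add, dotProduct_sub, smul_dotProduct,
    dotProduct_smul, smul_eq_mul, hw₁, hw₂, dot_self_cross, dot_cross_self, hww,
    dotProduct_self_eq_one hx, dotProduct_self_eq_one hy, dotProduct_comm v, dotProduct_comm y x]
  field_simp
  linear_combination (1 + x ⬝ᵥ y) ^ 2 * gram

lemma enorm3_rotApply (hx : enorm3 x = 1) (hy : enorm3 y = 1) (hne : x ≠ -y) (v : Fin 3 → ℝ) :
    enorm3 (rotApply x y v) = enorm3 v := by
  rw [enorm3, enorm3, rotApply_dotProduct_self hx hy hne]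

lemma abs_rotApply_sub_dotProduct_le (hx : enorm3 x = 1) (hy : enorm3 y = 1) (hne : x ≠ -y)
    (u w d : Fin 3 → ℝ) :
    |(rotApply x y u - w) ⬝ᵥ d| ≤ (enorm3 u + enorm3 w) * enorm3 d := by
  rw [sub_dotProduct, add_mul, ← enorm3_rotApply hx hy hne u]
  exact (abs_sub _ _).trans (add_le_add (abs_dotProduct_le _ _) (abs_dotProduct_le _ _))

lemma rotApply_sub_rotApply_dotProduct (hx : enorm3 x = 1) (hy : enorm3 y = 1)
    (hz : enorm3 z = 1) (hxy : x ≠ -y) (hxz : x ≠ -z) (v : Fin 3 → ℝ) :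
    (rotApply x y v - rotApply x z v) ⬝ᵥ (y - z) =
      (x ⬝ᵥ v) * ((y - z) ⬝ᵥ (y - z))
      + (x ⨯₃ y ⬝ᵥ v) * (x ⨯₃ y ⬝ᵥ (y - z)) / (1 + x ⬝ᵥ y)
      - (x ⨯₃ z ⬝ᵥ v) * (x ⨯₃ z ⬝ᵥ (y - z)) / (1 + x ⬝ᵥ z) := by
  rw [rotApply_eq hx hy hxy, rotApply_eq hx hz hxz]
  simp only [add_dotProduct, sub_dotProduct, dotProduct_sub, smul_dotProduct, smul_eq_mul,
    dotProduct_self_eq_one hy, dotProduct_self_eq_one hz, dotProduct_comm v, dotProduct_comm z y]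
  ring

lemma abs_cross_dotProduct_mul_div_le (hx : enorm3 x = 1) (hy : enorm3 y = 1) (hne : x ≠ -y)
    (v d : Fin 3 → ℝ) :
    |(x ⨯₃ y ⬝ᵥ v) * (x ⨯₃ y ⬝ᵥ d) / (1 + x ⬝ᵥ y)| ≤
      enorm3 v * enorm3 d * enorm3 (x - y) ^ 2 / 2 := by
  have hc : 0 < 1 + x ⬝ᵥ y := by linarith [neg_one_lt_dotProduct hx hy hne]
  have hw : enorm3 (x ⨯₃ y) ^ 2 = (1 - x ⬝ᵥ y) * (1 + x ⬝ᵥ y) := by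
    rw [enorm3_sq, cross_dot_cross, dotProduct_self_eq_one hx, dotProduct_self_eq_one hy,
      dotProduct_comm y x]
    ring
  rw [abs_div, abs_of_pos hc, div_le_iff₀ hc, abs_mul, enorm3_sub_sq hx hy]
  calc |x ⨯₃ y ⬝ᵥ v| * |x ⨯₃ y ⬝ᵥ d|
      ≤ enorm3 (x ⨯₃ y) * enorm3 v * (enorm3 (x ⨯₃ y) * enorm3 d) :=
        mul_le_mul (abs_dotProduct_le _ _) (abs_dotProduct_le _ _) (abs_nonneg _)
          (mul_nonneg (enorm3_nonneg _) (enorm3_nonneg _))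
    _ = enorm3 v * enorm3 d * enorm3 (x ⨯₃ y) ^ 2 := by ring
    _ = enorm3 v * enorm3 d * (2 - 2 * x ⬝ᵥ y) / 2 * (1 + x ⬝ᵥ y) := by rw [hw]; ring

lemma abs_rotApply_sub_rotApply_dotProduct_le (hx : enorm3 x = 1) (hy : enorm3 y = 1)
    (hz : enorm3 z = 1) (hxy : x ≠ -y) (hxz : x ≠ -z) (v : Fin 3 → ℝ) :
    |(rotApply x y v - rotApply x z v) ⬝ᵥ (y - z)| ≤ enorm3 v * enorm3 (y - z) ^ 2
      + enorm3 v * enorm3 (y - z) * (enorm3 (x - y) ^ 2 + enorm3 (x - z) ^ 2) / 2 := by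
  rw [rotApply_sub_rotApply_dotProduct hx hy hz hxy hxz, ← enorm3_sq]
  have hxv : |(x ⬝ᵥ v) * enorm3 (y - z) ^ 2| ≤ enorm3 v * enorm3 (y - z) ^ 2 := by
    rw [abs_mul, abs_of_nonneg (sq_nonneg (enorm3 (y - z)))]
    gcongr
    simpa [hx] using abs_dotProduct_le x v
  have hy' := abs_cross_dotProduct_mul_div_le hx hy hxy v (y - z)
  have hz' := abs_cross_dotProduct_mul_div_le hx hz hxz v (y - z)
  refine (abs_sub _ _).trans ((add_le_add_left (abs_add_le _ _) _).trans ?_)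
  linarith

end Rotation

lemma abs_sub_apply_zero_le {ψ ψ' : ℝ → ℝ} {L C s : ℝ}
    (hψ : ∀ t ∈ Icc 0 L, HasDerivWithinAt ψ (ψ' t) (Icc 0 L) t)
    (hC : ∀ t ∈ Icc 0 L, |ψ' t| ≤ C) (hs : s ∈ Icc 0 L) : |ψ s - ψ 0| ≤ C * s := by
  simpa [abs_of_nonneg hs.1] using
    Convex.norm_image_sub_le_of_norm_hasDerivWithin_le hψ hC (convex_Icc 0 L)
      (left_mem_Icc.2 (hs.1.trans hs.2)) hs

lemma abs_sum_div_le {N : ℕ} (hN : 0 < N) {f : Fin N → ℝ} {B : ℝ} (hf : ∀ k, |f k| ≤ B) :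
    |(∑ k, f k) / N| ≤ B := by
  rw [abs_div, Nat.abs_cast, div_le_iff₀ (Nat.cast_pos.2 hN)]
  calc |∑ k, f k| ≤ ∑ k, |f k| := Finset.abs_sum_le_sum_abs _ _
    _ ≤ ∑ _k : Fin N, B := Finset.sum_le_sum fun k _ => hf k
    _ = B * N := by simp [mul_comm]

lemma abs_div_mul_sum_le {N : ℕ} (hN : 0 < N) {c B : ℝ} (hc : 0 ≤ c) {f : Fin N → ℝ}
    (hf : ∀ k, |f k| ≤ B) : |c / N * ∑ k, f k| ≤ c * B := by
  rw [div_mul_eq_mul_div, mul_div_assoc, abs_mul, abs_of_nonneg hc]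
  exact mul_le_mul_of_nonneg_left (abs_sum_div_le hN hf) hc

section Configuration

variable {N : ℕ} {x v : Fin N → Fin 3 → ℝ} {V Dx : ℝ}

lemma abs_speed_term_le (hV : ∀ k, enorm3 (v k) ≤ V) (hD : ∀ a b, enorm3 (x a - x b) ≤ Dx)
    (i j : Fin N) :
    |-((enorm3 (v i) ^ 2 + enorm3 (v j) ^ 2) / 2) * enorm3 (x i - x j) ^ 2| ≤ V ^ 2 * Dx ^ 2 := by
  have hv (k : Fin N) : enorm3 (v k) ^ 2 ≤ V ^ 2 := pow_le_pow_left₀ (enorm3_nonneg _) (hV k) 2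
  rw [abs_mul, abs_neg, abs_of_nonneg (by positivity), abs_of_nonneg (by positivity)]
  gcongr
  · linarith [hv i, hv j]
  · exact enorm3_nonneg _
  · exact hD i j

lemma abs_transport_sum_le (hN : 0 < N) {c : ℝ} (hc : 0 ≤ c) (hx : ∀ a, enorm3 (x a) = 1)
    (hanti : ∀ a b, x a ≠ -(x b)) (hV : ∀ k, enorm3 (v k) ≤ V)
    (hD : ∀ a b, enorm3 (x a - x b) ≤ Dx) (i j : Fin N) :
    |c / N * ∑ k, (rotApply (x k) (x i) (v k) - rotApply (x k) (x j) (v k)) ⬝ᵥ (x i - x j)| ≤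
      c * (V * Dx ^ 2 + V * Dx ^ 3) := by
  refine abs_div_mul_sum_le hN hc fun k => ?_
  refine (abs_rotApply_sub_rotApply_dotProduct_le (hx k) (hx i) (hx j) (hanti k i) (hanti k j)
    (v k)).trans ?_
  have hV0 : 0 ≤ V := (enorm3_nonneg _).trans (hV k)
  have hD0 : 0 ≤ Dx := (enorm3_nonneg _).trans (hD i j)
  calc _ ≤ V * Dx ^ 2 + V * Dx * (Dx ^ 2 + Dx ^ 2) / 2 := by
        gcongr <;> first | exact hV k | exact hD _ _ | exact enorm3_nonneg _
    _ = V * Dx ^ 2 + V * Dx ^ 3 := by ring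

lemma abs_weighted_transport_sum_le (hN : 0 < N) (hx : ∀ a, enorm3 (x a) = 1)
    (hanti : ∀ a b, x a ≠ -(x b)) (hV : ∀ k, enorm3 (v k) ≤ V)
    (hD : ∀ a b, enorm3 (x a - x b) ≤ Dx) {ψ : ℝ → ℝ} {C : ℝ}
    (hψ : ∀ s ∈ Icc (0 : ℝ) 2, |ψ s - ψ 0| ≤ C * s) (hC : 0 ≤ C) (a i j : Fin N) :
    |∑ k, (ψ (enorm3 (x a - x k)) / N - ψ (enorm3 (x a - x a)) / N) *
        ((rotApply (x k) (x a) (v k) - v a) ⬝ᵥ (x i - x j))| ≤ 2 * C * V * Dx ^ 2 := by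
  simp_rw [sub_self, enorm3_zero, ← sub_div, div_mul_eq_mul_div, ← Finset.sum_div]
  refine abs_sum_div_le hN fun k => ?_
  have hcoef : |ψ (enorm3 (x a - x k)) - ψ 0| ≤ C * Dx :=
    (hψ _ (enorm3_sub_mem_Icc (hx a) (hx k))).trans (mul_le_mul_of_nonneg_left (hD a k) hC)
  have hdot : |(rotApply (x k) (x a) (v k) - v a) ⬝ᵥ (x i - x j)| ≤ (V + V) * Dx :=
    (abs_rotApply_sub_dotProduct_le (hx k) (hx a) (hanti k a) _ _ _).trans
      (mul_le_mul (add_le_add (hV k) (hV a)) (hD i j) (enorm3_nonneg _)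
        ((add_nonneg (enorm3_nonneg _) (enorm3_nonneg _)).trans (add_le_add (hV k) (hV a))))
  calc _ = |ψ (enorm3 (x a - x k)) - ψ 0| * |(rotApply (x k) (x a) (v k) - v a) ⬝ᵥ (x i - x j)| :=
        abs_mul _ _
    _ ≤ C * Dx * ((V + V) * Dx) :=
        mul_le_mul hcoef hdot (abs_nonneg _) (mul_nonneg hC ((enorm3_nonneg _).trans (hD a k)))
    _ = 2 * C * V * Dx ^ 2 := by ring

lemma abs_distance_sum_le (hN : 0 < N) {σ : ℝ} (hσ : 0 ≤ σ)
    (hD : ∀ a b, enorm3 (x a - x b) ≤ Dx) (a i j : Fin N) :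
    |σ / (4 * N) * ∑ k, enorm3 (x k - x a) ^ 2 * enorm3 (x i - x j) ^ 2| ≤ σ / 4 * Dx ^ 4 := by
  rw [← div_div]
  refine abs_div_mul_sum_le hN (by positivity) fun k => ?_
  rw [abs_of_nonneg (by positivity)]
  calc _ ≤ Dx ^ 2 * Dx ^ 2 := by
        gcongr <;> first | exact enorm3_nonneg _ | exact hD _ _
    _ = Dx ^ 4 := by ring

end Configuration

theorem F2_bound_general (N : ℕ) (σ : ℝ) (hσ : 0 < σ)
    (ψ ψ' : ℝ → ℝ)
    (hψ' : ∀ s ∈ Set.Icc (0:ℝ) 2, HasDerivWithinAt ψ (ψ' s) (Set.Icc 0 2) s)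
    (hψnn : ∀ s ∈ Set.Icc (0:ℝ) 2, 0 ≤ ψ s)
    (C1 : ℝ) (hC1 : IsLUB ((fun s => |ψ s| + |ψ' s|) '' Set.Icc (0:ℝ) 2) C1)
    (x v : Fin N → Fin 3 → ℝ)
    (hx : ∀ a, enorm3 (x a) = 1) (hanti : ∀ a b, x a ≠ -(x b))
    (i j : Fin N) (V Dx : ℝ)
    (hV : IsGreatest (Set.range fun k => enorm3 (v k)) V)
    (hDx : IsGreatest (Set.range fun p : Fin N × Fin N => enorm3 (x p.1 - x p.2)) Dx)
    (F₂ : ℝ)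
    (hF₂ : F₂ = -(((enorm3 (v i))^2 + (enorm3 (v j))^2) / 2) * (enorm3 (x i - x j))^2
      + ψ 0 / N * ∑ k,
          ((rotApply (x k) (x i) (v k) - rotApply (x k) (x j) (v k)) ⬝ᵥ (x i - x j))
      + (∑ k, (ψ (enorm3 (x i - x k)) / N - ψ (enorm3 (x i - x i)) / N) *
          ((rotApply (x k) (x i) (v k) - v i) ⬝ᵥ (x i - x j)))
      - (∑ k, (ψ (enorm3 (x j - x k)) / N - ψ (enorm3 (x j - x j)) / N) *
          ((rotApply (x k) (x j) (v k) - v j) ⬝ᵥ (x i - x j)))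
      + σ / (4 * N) * ∑ k, (enorm3 (x k - x i))^2 * (enorm3 (x i - x j))^2
      + σ / (4 * N) * ∑ k, (enorm3 (x k - x j))^2 * (enorm3 (x i - x j))^2) :
    |F₂| ≤ (V + 6 * C1) * V * Dx^2 + ψ 0 * V * Dx^3 + σ / 2 * Dx^4 := by
  have hN : 0 < N := i.pos
  have hVk (k : Fin N) : enorm3 (v k) ≤ V := hV.2 ⟨k, rfl⟩
  have hD (a b : Fin N) : enorm3 (x a - x b) ≤ Dx := hDx.2 ⟨(a, b), rfl⟩
  have hψC1 (s : ℝ) (hs : s ∈ Icc (0 : ℝ) 2) : |ψ s| + |ψ' s| ≤ C1 := hC1.1 ⟨s, hs, rfl⟩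
  have h0 : (0 : ℝ) ∈ Icc (0 : ℝ) 2 := left_mem_Icc.2 zero_le_two
  have hψ0 : ψ 0 ≤ C1 := by linarith [hψC1 0 h0, le_abs_self (ψ 0), abs_nonneg (ψ' 0)]
  have hC : 0 ≤ C1 := (hψnn 0 h0).trans hψ0
  have hlip (s : ℝ) (hs : s ∈ Icc (0 : ℝ) 2) : |ψ s - ψ 0| ≤ C1 * s :=
    abs_sub_apply_zero_le hψ' (fun t ht => by linarith [hψC1 t ht, abs_nonneg (ψ t)]) hs
  obtain ⟨h₁, h₁'⟩ := abs_le.1 (abs_speed_term_le hVk hD i j)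
  obtain ⟨h₂, h₂'⟩ := abs_le.1 (abs_transport_sum_le hN (hψnn 0 h0) hx hanti hVk hD i j)
  obtain ⟨h₃, h₃'⟩ := abs_le.1 (abs_weighted_transport_sum_le hN hx hanti hVk hD hlip hC i i j)
  obtain ⟨h₄, h₄'⟩ := abs_le.1 (abs_weighted_transport_sum_le hN hx hanti hVk hD hlip hC j i j)
  obtain ⟨h₅, h₅'⟩ := abs_le.1 (abs_distance_sum_le hN hσ.le hD i i j)
  obtain ⟨h₆, h₆'⟩ := abs_le.1 (abs_distance_sum_le hN hσ.le hD j i j)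
  have hslack : ψ 0 * (V * Dx ^ 2) ≤ C1 * (V * Dx ^ 2) :=
    mul_le_mul_of_nonneg_right hψ0 (mul_nonneg ((enorm3_nonneg _).trans (hVk i)) (sq_nonneg _))
  rw [hF₂, abs_le]
  constructor <;> linarith

/-- Bound on the inhomogeneous term `F₂`:
`|F₂| ≤ (𝒱 + 6‖ψ‖_{C¹}) 𝒱 𝒟ₓ² + ψ₀ 𝒱 𝒟ₓ³ + (σ/2) 𝒟ₓ⁴`. -/
theorem F2_bound (N : ℕ) (hN : 1 ≤ N) (σ : ℝ) (hσ : 0 < σ)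
    (ψ ψ' : ℝ → ℝ)
    (hψ' : ∀ s ∈ Set.Icc (0:ℝ) 2, HasDerivWithinAt ψ (ψ' s) (Set.Icc 0 2) s)
    (hψ'c : ContinuousOn ψ' (Set.Icc 0 2))
    (hψnn : ∀ s ∈ Set.Icc (0:ℝ) 2, 0 ≤ ψ s)
    (hψanti : StrictAntiOn ψ (Set.Icc 0 2)) (hψ2 : ψ 2 = 0)
    (C1 : ℝ) (hC1 : IsLUB ((fun s => |ψ s| + |ψ' s|) '' Set.Icc (0:ℝ) 2) C1)
    (x v : Fin N → Fin 3 → ℝ)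
    (hx : ∀ a, enorm3 (x a) = 1) (hanti : ∀ a b, x a ≠ -(x b))
    (i j : Fin N) (V Dx : ℝ)
    (hV : IsGreatest (Set.range fun k => enorm3 (v k)) V)
    (hDx : IsGreatest (Set.range fun p : Fin N × Fin N => enorm3 (x p.1 - x p.2)) Dx)
    (F₂ : ℝ)
    (hF₂ : F₂ = -(((enorm3 (v i))^2 + (enorm3 (v j))^2) / 2) * (enorm3 (x i - x j))^2
      + ψ 0 / N * ∑ k,
          ((rotApply (x k) (x i) (v k) - rotApply (x k) (x j) (v k)) ⬝ᵥ (x i - x j))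
      + (∑ k, (ψ (enorm3 (x i - x k)) / N - ψ (enorm3 (x i - x i)) / N) *
          ((rotApply (x k) (x i) (v k) - v i) ⬝ᵥ (x i - x j)))
      - (∑ k, (ψ (enorm3 (x j - x k)) / N - ψ (enorm3 (x j - x j)) / N) *
          ((rotApply (x k) (x j) (v k) - v j) ⬝ᵥ (x i - x j)))
      + σ / (4 * N) * ∑ k, (enorm3 (x k - x i))^2 * (enorm3 (x i - x j))^2
      + σ / (4 * N) * ∑ k, (enorm3 (x k - x j))^2 * (enorm3 (x i - x j))^2) :
    |F₂| ≤ (V + 6 * C1) * V * Dx^2 + ψ 0 * V * Dx^3 + σ / 2 * Dx^4 :=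
  F2_bound_general N σ hσ ψ ψ' hψ' hψnn C1 hC1 x v hx hanti i j V Dx hV hDx F₂ hF₂
end
end
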